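/- arXiv:1609.02414 — 2 statements merged into one kernel-verified Lean document; each statement's English description precedes it below -/
import Mathlib

section
/- Let q : (0,1) → [0,∞) be a probability density on (0,1) such that q(y) = q₁(1−y)^{μ₁} + o((1−y)^{μ₁}) as y → 1 for some q₁ ≥ 0 and μ₁ > −1. Let θ ∈ (0,1], η > 0, ε ≥ 0, and Ṽ(x) = x^{−ε} e^{η x^θ}. Then for every C ∈ (0,1) there exists x₀ > 0 such that for all x ≥ x₀, ∫₀¹ Ṽ(xy) q(y) dy ≤ (1 − C) Ṽ(x). -/
/-!
Writing `Ṽ(xy) = Ṽ(x) · y^{-ε} · exp(η x^θ (y^θ - 1))` turns the claim into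
`∫₀¹ exp(η x^θ (y^θ - 1)) y^{-ε} q(y) dy ≤ 1 - C` for large `x`. Since `y^θ - 1 < 0` on `(0,1)`
and `η x^θ → ∞`, the integrand tends to `0` pointwise under the integrable majorant
`y^{-ε} q(y)`, so the integral tends to `0` by dominated convergence (if `y^{-ε} q(y)` is
not integrable, all these integrals are `0` by convention).
-/

open Filter Set MeasureTheory Topology

namespace MeasureTheory

variable {α : Type*} [MeasurableSpace α] {μ : Measure α} {f g : α → ℝ}

lemma integrable_of_integrable_exp_mul_mul {c t : ℝ} (hg : AEMeasurable g μ)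
    (hgc : ∀ᵐ a ∂μ, c ≤ g a) (ht : 0 ≤ t)
    (hf : Integrable (fun a => Real.exp (t * g a) * f a) μ) : Integrable f μ := by
  have hbdd : ∀ᵐ a ∂μ, ‖Real.exp (-(t * g a))‖ ≤ Real.exp (-(t * c)) := by
    filter_upwards [hgc] with a ha
    rw [Real.norm_of_nonneg (Real.exp_nonneg _), Real.exp_le_exp]
    nlinarith
  refine (hf.bdd_mul (by fun_prop) hbdd).congr (Eventually.of_forall fun a => ?_)
  simp [← mul_assoc, ← Real.exp_add]

/-- The lower bound on `g` covers non-integrable `f`: then `exp (t * g) * f` is not integrable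
either, and every integral is `0`. -/
theorem tendsto_integral_exp_mul_mul_atTop {c : ℝ} (hg : AEMeasurable g μ)
    (hg_neg : ∀ᵐ a ∂μ, g a < 0) (hgc : ∀ᵐ a ∂μ, c ≤ g a) :
    Tendsto (fun t => ∫ a, Real.exp (t * g a) * f a ∂μ) atTop (𝓝 0) := by
  by_cases hf : Integrable f μ
  · have hbound : ∀ᶠ t in atTop, ∀ᵐ a ∂μ, ‖Real.exp (t * g a) * f a‖ ≤ ‖f a‖ := by
      filter_upwards [eventually_ge_atTop 0] with t ht
      filter_upwards [hg_neg] with a ha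
      rw [norm_mul, Real.norm_of_nonneg (Real.exp_nonneg _)]
      exact mul_le_of_le_one_left (norm_nonneg _)
        (Real.exp_le_one_iff.2 (mul_nonpos_of_nonneg_of_nonpos ht ha.le))
    have hlim : ∀ᵐ a ∂μ, Tendsto (fun t => Real.exp (t * g a) * f a) atTop (𝓝 0) := by
      filter_upwards [hg_neg] with a ha
      simpa using ((Real.tendsto_exp_atBot.comp
        (tendsto_id.atTop_mul_const_of_neg ha)).mul_const (f a))
    simpa using tendsto_integral_filter_of_dominated_convergence _
      (Eventually.of_forall fun t => by fun_prop) hbound hf.norm hlim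
  · refine tendsto_const_nhds.congr' ?_
    filter_upwards [eventually_ge_atTop 0] with t ht
    exact (integral_undef fun h => hf (integrable_of_integrable_exp_mul_mul hg hgc ht h)).symm

end MeasureTheory

/-- The exponential Lyapunov function `Ṽ`. -/
noncomputable def expLyapunov (ε η θ x : ℝ) : ℝ := x ^ (-ε) * Real.exp (η * x ^ θ)

section expLyapunov

variable {ε η θ x y : ℝ}

lemma expLyapunov_pos (hx : 0 < x) : 0 < expLyapunov ε η θ x := by
  unfold expLyapunov
  positivity

lemma expLyapunov_mul (hx : 0 ≤ x) (hy : 0 ≤ y) :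
    expLyapunov ε η θ (x * y) =
      expLyapunov ε η θ x * (Real.exp (η * x ^ θ * (y ^ θ - 1)) * y ^ (-ε)) := by
  have hexp : η * (x * y) ^ θ = η * x ^ θ + η * x ^ θ * (y ^ θ - 1) := by
    rw [Real.mul_rpow hx hy]
    ring
  rw [expLyapunov, hexp, Real.exp_add, Real.mul_rpow hx hy, expLyapunov]
  ring

lemma setIntegral_expLyapunov_mul (q : ℝ → ℝ) (hx : 0 ≤ x) :
    ∫ y in Ioo (0 : ℝ) 1, expLyapunov ε η θ (x * y) * q y =
      expLyapunov ε η θ x *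
        ∫ y in Ioo (0 : ℝ) 1, Real.exp (η * x ^ θ * (y ^ θ - 1)) * (y ^ (-ε) * q y) := by
  rw [← integral_const_mul]
  refine setIntegral_congr_fun measurableSet_Ioo fun y hy => ?_
  rw [expLyapunov_mul hx hy.1.le]
  ring

end expLyapunov

lemma tendsto_setIntegral_exp_mul_rpow_sub_one {θ : ℝ} (hθ : 0 < θ) (f : ℝ → ℝ) :
    Tendsto (fun t => ∫ y in Ioo (0 : ℝ) 1, Real.exp (t * (y ^ θ - 1)) * f y) atTop (𝓝 0) := by
  refine tendsto_integral_exp_mul_mul_atTop (c := -1) (by fun_prop) ?_ ?_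
  · filter_upwards [ae_restrict_mem measurableSet_Ioo] with y hy
    exact sub_neg.2 (Real.rpow_lt_one hy.1.le hy.2 hθ)
  · filter_upwards [ae_restrict_mem measurableSet_Ioo] with y hy
    linarith [Real.rpow_nonneg hy.1.le θ]

theorem stmt_7_general (θ η ε : ℝ)
    (hθ0 : 0 < θ) (hη : 0 < η)
    (q : ℝ → ℝ)
    (V : ℝ → ℝ) (hV : ∀ x : ℝ, V x = x ^ (-ε) * Real.exp (η * x ^ θ)) :
    ∀ C : ℝ, 0 < C → C < 1 → ∃ x₀ : ℝ, 0 < x₀ ∧ ∀ x : ℝ, x₀ ≤ x →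
      (∫ y in Ioo (0:ℝ) 1, V (x * y) * q y) ≤ (1 - C) * V x := by
  intro C _ hC1
  obtain rfl : V = expLyapunov ε η θ := funext hV
  have hlim := (tendsto_setIntegral_exp_mul_rpow_sub_one hθ0 fun y => y ^ (-ε) * q y).comp
    ((tendsto_rpow_atTop hθ0).const_mul_atTop hη)
  obtain ⟨x₀, hx₀⟩ := eventually_atTop.1
    ((hlim.eventually (ge_mem_nhds (sub_pos.2 hC1))).and (eventually_gt_atTop 0))
  refine ⟨max x₀ 1, one_pos.trans_le (le_max_right _ _), fun x hx => ?_⟩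
  obtain ⟨hsmall, hxpos⟩ := hx₀ x ((le_max_left _ _).trans hx)
  rw [setIntegral_expLyapunov_mul q hxpos.le, mul_comm (1 - C)]
  exact mul_le_mul_of_nonneg_left hsmall (expLyapunov_pos hxpos).le

/-- If the fragmentation kernel has density `q` with `q(y) = q₁(1-y)^{μ₁} + o((1-y)^{μ₁})`
as `y → 1`, then for the exponential Lyapunov function `Ṽ(x) = x^{-ε} e^{η x^θ}` and any
`C ∈ (0,1)` there is `x₀ > 0` with `∫₀¹ Ṽ(xy) q(y) dy ≤ (1-C) Ṽ(x)` for all `x ≥ x₀`. -/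
theorem stmt_7 (θ η ε μ₁ q₁ : ℝ)
    (hθ0 : 0 < θ) (hθ1 : θ ≤ 1) (hη : 0 < η) (hε : 0 ≤ ε) (hμ₁ : -1 < μ₁) (hq₁ : 0 ≤ q₁)
    (q : ℝ → ℝ) (hqmeas : Measurable q) (hqpos : ∀ y ∈ Ioo (0:ℝ) 1, 0 ≤ q y)
    (hqint : ∫ y in Ioo (0:ℝ) 1, q y = 1)
    (hq1 : (fun y => q y - q₁ * (1 - y) ^ μ₁) =o[nhdsWithin 1 (Iio (1:ℝ))]
      (fun y => (1 - y) ^ μ₁))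
    (V : ℝ → ℝ) (hV : ∀ x : ℝ, V x = x ^ (-ε) * Real.exp (η * x ^ θ)) :
    ∀ C : ℝ, 0 < C → C < 1 → ∃ x₀ : ℝ, 0 < x₀ ∧ ∀ x : ℝ, x₀ ≤ x →
      (∫ y in Ioo (0:ℝ) 1, V (x * y) * q y) ≤ (1 - C) * V x :=
  stmt_7_general θ η ε hθ0 hη q V hV
end

section
/- Let a, b > 0 and let V be defined by V(x) = x^{−b} on (0,1] and V(x) = xᵃ on [2,∞), with V ≥ 1 and smooth. For x ≥ 2, the generator L V(x) = a τ(x) x^{a−1} + β(x) ∫₀¹ [V(xy) − xᵃ] Q(x,dy) satisfies the bound L V(x) ≤ ( a τ(x)/x − β(x) ( 1 − M_x(a) − M_x(−b)/(x^b V(x)) − 2ᵃ/V(x) ) ) V(x), where M_x(s) = ∫₀¹ yˢ Q(x,dy). -/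
/-! On each of `(0,1]`, `[1,2]`, `[2,∞)` the function `V` is bounded by one of the nonnegative
quantities `u^{-b}`, `2^a`, `u^a`, so `V(xy) ≤ x^a y^a + x^{-b} y^{-b} + 2^a`; integrating against
`Q(x,·)` produces the moments `M_x(a)` and `M_x(-b)`, and with `V x = x^a` the rest is algebra. -/

open MeasureTheory Set

section Lyapunov

variable {V : ℝ → ℝ} {a b : ℝ}

theorem le_rpow_add_rpow_neg_add_two_rpow
    (hVlow : ∀ u : ℝ, 0 < u → u ≤ 1 → V u = u ^ (-b))
    (hVmid : ∀ u : ℝ, 1 ≤ u → u ≤ 2 → V u ≤ 2 ^ a)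
    (hVhigh : ∀ u : ℝ, 2 ≤ u → V u = u ^ a) {u : ℝ} (hu : 0 < u) :
    V u ≤ u ^ a + u ^ (-b) + 2 ^ a := by
  have h_pos : 0 ≤ u ^ a := Real.rpow_nonneg hu.le a
  have h_neg : 0 ≤ u ^ (-b) := Real.rpow_nonneg hu.le _
  have h_two : (0 : ℝ) ≤ 2 ^ a := by positivity
  rcases le_total u 1 with hu1 | hu1
  · rw [hVlow u hu hu1]; linarith
  rcases le_total u 2 with hu2 | hu2
  · linarith [hVmid u hu1 hu2]
  · rw [hVhigh u hu2]; linarith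

theorem integral_comp_mul_le_moments {μ : Measure ℝ} [IsProbabilityMeasure μ]
    (hpos : ∀ᵐ y ∂μ, 0 < y) {x : ℝ} (hx : 0 < x)
    (hV : ∀ u, 0 < u → V u ≤ u ^ a + u ^ (-b) + 2 ^ a)
    (hinta : Integrable (fun y : ℝ => y ^ a) μ)
    (hintb : Integrable (fun y : ℝ => y ^ (-b)) μ)
    (hintV : Integrable (fun y : ℝ => V (x * y)) μ) :
    ∫ y, V (x * y) ∂μ ≤ x ^ a * (∫ y, y ^ a ∂μ) + x ^ (-b) * (∫ y, y ^ (-b) ∂μ) + 2 ^ a := by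
  have h_pointwise : ∀ᵐ y ∂μ, V (x * y) ≤ x ^ a * y ^ a + x ^ (-b) * y ^ (-b) + 2 ^ a := by
    filter_upwards [hpos] with y hy
    simpa only [Real.mul_rpow hx.le hy.le] using hV _ (mul_pos hx hy)
  have h_moments : Integrable (fun y : ℝ => x ^ a * y ^ a + x ^ (-b) * y ^ (-b)) μ :=
    (hinta.const_mul _).add (hintb.const_mul _)
  calc ∫ y, V (x * y) ∂μ
      ≤ ∫ y, (x ^ a * y ^ a + x ^ (-b) * y ^ (-b) + 2 ^ a) ∂μ :=
        integral_mono_ae hintV (h_moments.add (integrable_const _)) h_pointwise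
    _ = x ^ a * (∫ y, y ^ a ∂μ) + x ^ (-b) * (∫ y, y ^ (-b) ∂μ) + 2 ^ a := by
        rw [integral_add h_moments (integrable_const _),
          integral_add (hinta.const_mul _) (hintb.const_mul _),
          integral_const_mul, integral_const_mul, integral_const, probReal_univ, one_smul]

end Lyapunov

theorem stmt_14_general (τ β : ℝ → ℝ) (a b x : ℝ) (hx : 2 ≤ x)
    (hβ : 0 ≤ β x)
    (Q : ℝ → Measure ℝ) [IsProbabilityMeasure (Q x)]
    (hsupp : ∀ᵐ y ∂(Q x), y ∈ Ioc (0:ℝ) 1)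
    (V : ℝ → ℝ)
    (hVlow : ∀ u : ℝ, 0 < u → u ≤ 1 → V u = u ^ (-b))
    (hVmid : ∀ u : ℝ, 1 ≤ u → u ≤ 2 → V u ≤ 2 ^ a)
    (hVhigh : ∀ u : ℝ, 2 ≤ u → V u = u ^ a)
    (hinta : Integrable (fun y : ℝ => y ^ a) (Q x))
    (hintb : Integrable (fun y : ℝ => y ^ (-b)) (Q x))
    (hintV : Integrable (fun y : ℝ => V (x * y)) (Q x)) :
    a * τ x * x ^ (a - 1) + β x * ∫ y, (V (x * y) - x ^ a) ∂(Q x)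
      ≤ (a * τ x / x
          - β x * (1 - (∫ y, y ^ a ∂(Q x))
              - (∫ y, y ^ (-b) ∂(Q x)) / (x ^ b * V x) - 2 ^ a / V x)) * V x := by
  have hx0 : 0 < x := by linarith
  have h_jump := integral_comp_mul_le_moments (hsupp.mono fun _ hy => hy.1) hx0
    (fun _ hu => le_rpow_add_rpow_neg_add_two_rpow hVlow hVmid hVhigh hu) hinta hintb hintV
  have h_frag : β x * ∫ y, (V (x * y) - x ^ a) ∂(Q x) ≤ β x * (x ^ a * (∫ y, y ^ a ∂(Q x))
      + x ^ (-b) * (∫ y, y ^ (-b) ∂(Q x)) + 2 ^ a - x ^ a) := by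
    rw [integral_sub hintV (integrable_const _), integral_const, probReal_univ, one_smul]
    exact mul_le_mul_of_nonneg_left (sub_le_sub_right h_jump _) hβ
  rw [hVhigh x hx, Real.rpow_sub_one hx0.ne']
  rw [Real.rpow_neg hx0.le] at h_frag
  calc _ ≤ a * τ x * (x ^ a / x) + β x * (x ^ a * (∫ y, y ^ a ∂(Q x))
          + (x ^ b)⁻¹ * (∫ y, y ^ (-b) ∂(Q x)) + 2 ^ a - x ^ a) := by linarith
    _ = _ := by field_simp; ring

/-- For the polynomial Lyapunov function `V` (with `V(u) = u^{-b}` on `(0,1]`,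
`V(u) ≤ 2^a` on `[1,2]`, `V(u) = u^a` on `[2,∞)`, `V ≥ 1`) and `x ≥ 2`, the generator
satisfies
`L V(x) ≤ (a τ(x)/x - β(x)(1 - M_x(a) - M_x(-b)/(x^b V(x)) - 2^a/V(x))) V(x)`. -/
theorem stmt_14 (τ β : ℝ → ℝ) (a b x : ℝ) (ha : 0 < a) (hb : 0 < b) (hx : 2 ≤ x)
    (hτ : 0 ≤ τ x) (hβ : 0 ≤ β x)
    (Q : ℝ → Measure ℝ) [IsProbabilityMeasure (Q x)]
    (hsupp : ∀ᵐ y ∂(Q x), y ∈ Ioc (0:ℝ) 1)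
    (V : ℝ → ℝ) (hV1 : ∀ u : ℝ, 0 < u → 1 ≤ V u)
    (hVlow : ∀ u : ℝ, 0 < u → u ≤ 1 → V u = u ^ (-b))
    (hVmid : ∀ u : ℝ, 1 ≤ u → u ≤ 2 → V u ≤ 2 ^ a)
    (hVhigh : ∀ u : ℝ, 2 ≤ u → V u = u ^ a)
    (hinta : Integrable (fun y : ℝ => y ^ a) (Q x))
    (hintb : Integrable (fun y : ℝ => y ^ (-b)) (Q x))
    (hintV : Integrable (fun y : ℝ => V (x * y)) (Q x)) :
    a * τ x * x ^ (a - 1) + β x * ∫ y, (V (x * y) - x ^ a) ∂(Q x)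
      ≤ (a * τ x / x
          - β x * (1 - (∫ y, y ^ a ∂(Q x))
              - (∫ y, y ^ (-b) ∂(Q x)) / (x ^ b * V x) - 2 ^ a / V x)) * V x :=
  stmt_14_general τ β a b x hx hβ Q hsupp V hVlow hVmid hVhigh hinta hintb hintV
end
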